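/- arXiv:1309.3803 — 6 statements merged into one kernel-verified Lean document; each statement's English description precedes it below -/
import Mathlib

section
/- Let π be a group and φ a normal subgroup of π whose center is trivial. Then the quotient homomorphism π → π/φ admits a group-homomorphism section if and only if there exists a group homomorphism ψ : π/φ → Aut(φ) such that for every x ∈ π there exists n ∈ φ with ψ(xφ)(m) = (x n) m (x n)⁻¹ for all m ∈ φ (i.e. the action of π/φ on φ by outer automorphisms induced by conjugation in π lifts to a genuine action by automorphisms). -/
/-!
When `φ` has trivial center, an element `y ∈ π` is determined by its coset `yφ` together with
the automorphism of `φ` it induces by conjugation: if `y` and `z` agree on both, then `y⁻¹ z`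
lies in `φ` and commutes with all of `φ`. So `y ↦ (conj y, yφ)` embeds `π` into
`Aut(φ) × π/φ`. A lift `ψ` of the outer action says precisely that the graph `q ↦ (ψ q, q)` of
`ψ` lands in the image of this embedding, and pulling the graph back along the embedding gives a
section. Conversely, a section `s` yields the lift `q ↦ conj (s q)`.
-/

theorem MonoidHom.exists_comp_eq_of_range_le {G H K : Type*} [Group G] [Group H] [Group K]
    {f : G →* H} (hf : Function.Injective f) {g : K →* H} (hg : g.range ≤ f.range) :
    ∃ s : K →* G, f.comp s = g :=
  ⟨(MonoidHom.ofInjective hf).symm.toMonoidHom.comp (g.codRestrict f.range fun k => hg ⟨k, rfl⟩),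
    by ext k; simp⟩

namespace Subgroup

variable {π : Type*} [Group π] (φ : Subgroup π) [φ.Normal]

noncomputable def conjNormalProdMk : π →* MulAut φ × (π ⧸ φ) :=
  MulAut.conjNormal.prod (QuotientGroup.mk' φ)

theorem injective_conjNormalProdMk (hcenter : center φ = ⊥) :
    Function.Injective (conjNormalProdMk φ) := by
  refine (injective_iff_map_eq_one _).mpr fun y hy => ?_
  obtain ⟨hconj, hmk⟩ := Prod.ext_iff.mp hy
  have hyφ : y ∈ φ := (QuotientGroup.eq_one_iff y).mp hmk
  have hcentral : (⟨y, hyφ⟩ : φ) ∈ center φ := by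
    refine mem_center_iff.mpr fun m => Subtype.ext ?_
    have hm := congrArg Subtype.val (DFunLike.congr_fun hconj m)
    simp only [conjNormalProdMk, MonoidHom.prod_apply, MulAut.conjNormal_apply, Prod.fst_one,
      MulAut.one_apply] at hm
    exact (mul_inv_eq_iff_eq_mul.mp hm).symm
  simpa [hcenter] using hcentral

theorem range_prod_id_le_range_conjNormalProdMk (ψ : (π ⧸ φ) →* MulAut φ)
    (hψ : ∀ x : π, ∃ n : φ, ∀ m : φ, ((ψ x) m : π) = (x * n) * m * (x * n)⁻¹) :
    (ψ.prod (MonoidHom.id _)).range ≤ (conjNormalProdMk φ).range := by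
  rintro _ ⟨q, rfl⟩
  induction q using QuotientGroup.induction_on with | H x => ?_
  obtain ⟨n, hn⟩ := hψ x
  refine ⟨x * n, Prod.ext ?_ ?_⟩
  · ext m
    simp only [conjNormalProdMk, MonoidHom.prod_apply, MulAut.conjNormal_apply, hn]
  · simp [conjNormalProdMk]

end Subgroup

/-- Let `π` be a group and `φ` a normal subgroup of `π` whose center is trivial.
Then the quotient homomorphism `π → π/φ` admits a group-homomorphism section if and
only if the outer action of `π/φ` on `φ` induced by conjugation in `π` lifts to a
homomorphism `ψ : π/φ → Aut(φ)`. -/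
theorem quotient_splits_iff_outer_action_lifts (π : Type*) [Group π]
    (φ : Subgroup π) [φ.Normal] (hcenter : Subgroup.center φ = ⊥) :
    (∃ s : (π ⧸ φ) →* π, (QuotientGroup.mk' φ).comp s = MonoidHom.id (π ⧸ φ)) ↔
      ∃ ψ : (π ⧸ φ) →* MulAut φ,
        ∀ x : π, ∃ n : φ, ∀ m : φ,
          ((ψ (QuotientGroup.mk x)) m : π) = (x * n) * m * (x * n)⁻¹ := by
  constructor
  · rintro ⟨s, hs⟩
    refine ⟨MulAut.conjNormal.comp s, fun x => ?_⟩
    have hmk : (QuotientGroup.mk (s x) : π ⧸ φ) = x := DFunLike.congr_fun hs (x : π ⧸ φ)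
    refine ⟨⟨x⁻¹ * s x, QuotientGroup.eq.mp hmk.symm⟩, fun m => ?_⟩
    simp
  · rintro ⟨ψ, hψ⟩
    obtain ⟨s, hs⟩ := MonoidHom.exists_comp_eq_of_range_le (φ.injective_conjNormalProdMk hcenter)
      (φ.range_prod_id_le_range_conjNormalProdMk ψ hψ)
    refine ⟨s, ?_⟩
    rw [← MonoidHom.snd_comp_prod ψ (MonoidHom.id _), ← hs]
    rfl
end

section
/- Let π be a group and φ a normal subgroup of π whose center is trivial, and suppose ψ : π/φ → Aut(φ) is a group homomorphism such that for every x ∈ π there exists n ∈ φ with ψ(xφ)(m) = (x n) m (x n)⁻¹ for all m ∈ φ. Then there is a group isomorphism Θ from π to the semidirect product φ ⋊_ψ (π/φ) such that Θ sends each m ∈ φ to the canonical copy of m in the semidirect product, and the composite of Θ with the projection of the semidirect product onto π/φ is the quotient homomorphism π → π/φ. In particular, an extension with centerless kernel is determined up to equivalence by its outer action. -/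
/-!
The elements of `π` whose conjugation action on `φ` is `ψ` of their class form a subgroup `C`.
It meets `φ` trivially because `φ` is centerless, and it meets every coset of `φ` by the
hypothesis on `ψ`; so `C` is a complement of `φ`, mapped isomorphically onto `π ⧸ φ`, and the
internal semidirect product `π ≃* φ ⋊ C` becomes `φ ⋊[ψ] (π ⧸ φ)`.
-/

namespace SemidirectProduct

theorem exists_mulEquiv_of_isComplement' {G : Type*} [Group G] {N K : Subgroup G} [N.Normal]
    (hNK : N.IsComplement' K) (ψ : G ⧸ N →* MulAut N)
    (hK : ∀ k ∈ K, MulAut.conjNormal k = ψ k) :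
    ∃ Θ : G ≃* N ⋊[ψ] (G ⧸ N), (∀ m : N, Θ m = inl m) ∧ ∀ g, (Θ g).right = g := by
  let e : K ≃* G ⧸ N := MulEquiv.ofBijective ((QuotientGroup.mk' N).comp K.subtype)
    (Subgroup.isComplement_subgroup_right_iff_bijective.mp hNK.symm)
  let Θ := (mulEquivSubgroup hNK).symm.trans <| congr (MulEquiv.refl N) e fun k => by
    ext m
    exact congrArg (fun f : MulAut N => (f m : G)) (hK k k.2)
  refine ⟨Θ, fun m => ?_, fun g => ?_⟩
  · have : (mulEquivSubgroup hNK).symm m = inl m :=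
      (mulEquivSubgroup hNK).symm_apply_eq.mpr (by simp)
    simp only [Θ, MulEquiv.trans_apply, this]
    ext <;> simp
  · set x := (mulEquivSubgroup hNK).symm g
    have hg : g = x.left * x.right := ((mulEquivSubgroup hNK).apply_symm_apply g).symm
    show ((x.right : G) : G ⧸ N) = g
    rw [hg, QuotientGroup.mk_mul, (QuotientGroup.eq_one_iff _).mpr x.left.2, one_mul]

end SemidirectProduct

namespace Subgroup

variable {G : Type*} [Group G] (N : Subgroup G) [N.Normal] (ψ : G ⧸ N →* MulAut N)

def conjEqLocus : Subgroup G :=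
  MonoidHom.eqLocus MulAut.conjNormal (ψ.comp (QuotientGroup.mk' N))

variable {N ψ} in
theorem mem_conjEqLocus_iff {g : G} :
    g ∈ conjEqLocus N ψ ↔ ∀ m : N, (ψ g m : G) = g * m * g⁻¹ := by
  change MulAut.conjNormal g = ψ g ↔ _
  simp only [MulEquiv.ext_iff, Subtype.ext_iff, MulAut.conjNormal_apply, eq_comm]

theorem disjoint_conjEqLocus (hN : center N = ⊥) : Disjoint N (conjEqLocus N ψ) := by
  refine disjoint_def.mpr fun {x} hxN hx => ?_
  have hcentral : (⟨x, hxN⟩ : N) ∈ center N := by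
    refine mem_center_iff.mpr fun m => Subtype.ext ?_
    have hm := mem_conjEqLocus_iff.mp hx m
    rw [(QuotientGroup.eq_one_iff x).mpr hxN, map_one, MulAut.one_apply] at hm
    simpa [eq_mul_inv_iff_mul_eq] using hm
  simpa [hN] using hcentral

theorem isComplement'_conjEqLocus (hN : center N = ⊥)
    (hcoset : ∀ x : G, ∃ n : N, x * n ∈ conjEqLocus N ψ) :
    N.IsComplement' (conjEqLocus N ψ) := by
  refine isComplement'_of_disjoint_and_mul_eq_univ (disjoint_conjEqLocus N ψ hN) ?_
  refine Set.eq_univ_of_forall fun x => ?_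
  obtain ⟨n, hn⟩ := hcoset x
  exact ⟨x * n⁻¹ * x⁻¹, Normal.conj_mem ‹_› _ (N.inv_mem n.2) x, x * n, hn, by simp⟩

end Subgroup

/-- Let `π` be a group and `φ` a normal subgroup with trivial center, and suppose the
outer action of `π/φ` on `φ` induced by conjugation lifts to `ψ : π/φ →* Aut(φ)`.
Then `π` is isomorphic to the semidirect product `φ ⋊[ψ] (π/φ)` via an isomorphism which
is the canonical inclusion on `φ` and induces the quotient map to `π/φ`.
In particular, an extension with centerless kernel is determined by its outer action. -/
theorem extension_with_centerless_kernel_determined_by_action (π : Type*) [Group π]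
    (φ : Subgroup π) [φ.Normal] (hcenter : Subgroup.center φ = ⊥)
    (ψ : (π ⧸ φ) →* MulAut φ)
    (hψ : ∀ x : π, ∃ n : φ, ∀ m : φ,
      ((ψ (QuotientGroup.mk x)) m : π) = (x * n) * m * (x * n)⁻¹) :
    ∃ Θ : π ≃* φ ⋊[ψ] (π ⧸ φ),
      (∀ m : φ, Θ (m : π) = SemidirectProduct.inl m) ∧
      ∀ g : π, (Θ g).right = QuotientGroup.mk g := by
  have hcoset : ∀ x : π, ∃ n : φ, x * n ∈ φ.conjEqLocus ψ := fun x =>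
    (hψ x).imp fun n hn => by
      rwa [Subgroup.mem_conjEqLocus_iff, QuotientGroup.mk_mul_of_mem x n.2]
  exact SemidirectProduct.exists_mulEquiv_of_isComplement'
    (φ.isComplement'_conjEqLocus ψ hcenter hcoset) ψ fun _ hk => hk
end

section
/- Let p : π → β be a surjective group homomorphism that admits a group-homomorphism section s : β → π (so p ∘ s = id), and let K = ker p. Then the abelianization of π is isomorphic to the direct product (K / [π, K]) × (abelianization of β), where [π, K] is the subgroup of π generated by all commutators [g, k] with g ∈ π and k ∈ K (note [π, K] ≤ K since K is normal). -/
/-!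
With `K = ker p` and `r = s ∘ p`, every `g` factors as `(g * (r g)⁻¹) * r g` with the first factor
in `K`. The first factor is multiplicative only up to commutators `⁅r g, k⁆` with `k ∈ K`, so
`g ↦ g * (r g)⁻¹` is a homomorphism `π → K ⧸ ⁅π, K⁆`; together with `p` it gives
`πᵃᵇ → K ⧸ ⁅π, K⁆ × βᵃᵇ`, and the inclusion of `K` together with `sᵃᵇ` gives its inverse.
-/

open scoped commutatorElement

namespace Subgroup

variable {G : Type*} [Group G] (K : Subgroup G) [K.Normal]

instance : CommGroup (K ⧸ ⁅(⊤ : Subgroup G), K⁆.subgroupOf K) where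
  mul_comm a b := by
    induction a using QuotientGroup.induction_on with | H x =>
    induction b using QuotientGroup.induction_on with | H y =>
    rw [← QuotientGroup.mk_mul, ← QuotientGroup.mk_mul, QuotientGroup.eq, mem_subgroupOf]
    convert commutator_mem_commutator (mem_top (y : G)⁻¹) (inv_mem x.2) using 1
    simp only [coe_mul, coe_inv, mul_inv_rev, commutatorElement_def, inv_inv]
    group

def quotientCommutatorToAbelianization :
    K ⧸ ⁅(⊤ : Subgroup G), K⁆.subgroupOf K →* Abelianization G :=
  QuotientGroup.lift _ (Abelianization.of.comp K.subtype) fun x hx => by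
    rw [mem_subgroupOf] at hx
    exact MonoidHom.mem_ker.mpr <| Abelianization.commutator_subset_ker Abelianization.of
      (commutator_mono le_top le_top hx : (x : G) ∈ ⁅(⊤ : Subgroup G), ⊤⁆)

@[simp]
theorem quotientCommutatorToAbelianization_mk (k : K) :
    quotientCommutatorToAbelianization K k = Abelianization.of (k : G) :=
  rfl

end Subgroup

namespace MonoidHom

variable {G B : Type*} [Group G] [Group B] (p : G →* B) (s : B →* G)

theorem apply_section (hs : p.comp s = id B) (b : B) : p (s b) = b :=
  DFunLike.congr_fun hs b

theorem mul_inv_section_mem_ker (hs : p.comp s = id B) (g : G) : g * (s (p g))⁻¹ ∈ p.ker := by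
  simp [mem_ker, p.apply_section s hs]

def kerComponent (hs : p.comp s = id B) :
    G →* p.ker ⧸ ⁅(⊤ : Subgroup G), p.ker⁆.subgroupOf p.ker :=
  mk' (fun g => (⟨g * (s (p g))⁻¹, p.mul_inv_section_mem_ker s hs g⟩ : p.ker)) fun g h => by
    rw [← QuotientGroup.mk_mul, QuotientGroup.eq, Subgroup.mem_subgroupOf]
    convert Subgroup.commutator_mem_commutator (Subgroup.mem_top (s (p g)))
      (inv_mem (p.mul_inv_section_mem_ker s hs h)) using 1
    simp only [Subgroup.coe_mul, Subgroup.coe_inv, mul_inv_rev, inv_inv, map_mul,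
      commutatorElement_def]
    group

theorem kerComponent_apply (hs : p.comp s = id B) (g : G) :
    p.kerComponent s hs g = (⟨g * (s (p g))⁻¹, p.mul_inv_section_mem_ker s hs g⟩ : p.ker) :=
  rfl

theorem kerComponent_of_mem_ker (hs : p.comp s = id B) (k : p.ker) :
    p.kerComponent s hs k = k := by
  rw [kerComponent_apply]
  congr
  simp [mem_ker.mp k.2]

theorem kerComponent_section (hs : p.comp s = id B) (b : B) : p.kerComponent s hs (s b) = 1 := by
  rw [kerComponent_apply, ← QuotientGroup.mk_one]
  congr
  simp [p.apply_section s hs]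

def abelianizationEquivOfSection (hs : p.comp s = id B) :
    Abelianization G ≃* (p.ker ⧸ ⁅(⊤ : Subgroup G), p.ker⁆.subgroupOf p.ker) × Abelianization B :=
  toMulEquiv (Abelianization.lift ((p.kerComponent s hs).prod (Abelianization.of.comp p)))
    ((Subgroup.quotientCommutatorToAbelianization p.ker).coprod (Abelianization.map s))
    (Abelianization.hom_ext _ _ <| ext fun g => by
      simp [kerComponent_apply, ← map_mul])
    (by
      rw [← coprod_unique (comp _ _), ← coprod_inl_inr]
      congr 1
      · refine QuotientGroup.monoidHom_ext _ (ext fun k => ?_)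
        simp [kerComponent_of_mem_ker, mem_ker.mp k.2]
      · refine Abelianization.hom_ext _ _ (ext fun b => ?_)
        simp [kerComponent_section, p.apply_section s hs])

end MonoidHom

theorem abelianization_of_split_extension_general (π β : Type*) [Group π] [Group β]
    (p : π →* β)
    (s : β →* π) (hs : p.comp s = MonoidHom.id β) :
    Nonempty (Abelianization π ≃*
      ((p.ker ⧸ (⁅(⊤ : Subgroup π), p.ker⁆.subgroupOf p.ker)) × Abelianization β)) :=
  ⟨p.abelianizationEquivOfSection s hs⟩

/-- If a surjective group homomorphism `p : π → β` admits a section `s : β → π`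
and `K = ker p`, then the abelianization of `π` is isomorphic to
`(K / [π, K]) × (abelianization of β)`. -/
theorem abelianization_of_split_extension (π β : Type*) [Group π] [Group β]
    (p : π →* β) (hp : Function.Surjective p)
    (s : β →* π) (hs : p.comp s = MonoidHom.id β) :
    Nonempty (Abelianization π ≃*
      ((p.ker ⧸ (⁅(⊤ : Subgroup π), p.ker⁆.subgroupOf p.ker)) × Abelianization β)) :=
  abelianization_of_split_extension_general π β p s hs
end

section
/- Let G be a group with a finitely generated abelian normal subgroup A such that G/A is isomorphic to ℤ × ℤ. Then the quotient homomorphism G → G/A admits a group-homomorphism section if and only if the abelianization of G is isomorphic to the direct product (A / [G, A]) × ℤ × ℤ, where [G, A] is the subgroup of G generated by all commutators [g, a] with g ∈ G and a ∈ A (note [G, A] ≤ A since A is normal). -/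
/-!
If `s` splits `p : G → G/A`, then `g ↦ g · s(p g)⁻¹` becomes a homomorphism `G → A/[G, A]`,
because conjugation acts trivially on `A/[G, A]`. Together with `p` it identifies the
abelianization of `G` with `A/[G, A] × G/A`; the inverse is induced by the inclusion of `A` and
by `s`.

Conversely, lift the generators of `ℤ × ℤ` to `x, y ∈ G`. The map `(a, (m, n)) ↦ a x^m y^n`
from `A/[G, A] × ℤ²` onto the abelianization is injective, since the abelianization is
isomorphic to its source and finitely generated abelian groups are Hopfian. As `[x, y]` dies in
the abelianization, `[x, y] ∈ [G, A]`. Since `G` is generated by `A`, `x` and `y`, the group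
`[G, A]` consists of the products `[x, b][y, a]` with `a, b ∈ A`; writing `[x, y]` in this form,
`a x` and `b⁻¹ y` commute, so they span a section.
-/

open Function
open scoped IsMulCommutative commutatorElement

section

variable {G : Type*} [Group G]

theorem Subgroup.commutator_top_le_of_closure_eq_top {A N : Subgroup G} [A.Normal] {S : Set G}
    (hS : closure S = ⊤) (h : ∀ s ∈ S, ∀ a ∈ A, ⁅s, a⁆ ∈ N) :
    ⁅(⊤ : Subgroup G), A⁆ ≤ N := by
  rw [commutator_le]
  rintro g -
  induction hS ▸ mem_top g using closure_induction with
  | mem s hs => exact h s hs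
  | one => simp [one_mem]
  | mul g₁ g₂ _ _ h₁ h₂ =>
    intro a ha
    have : ⁅g₁ * g₂, a⁆ = ⁅g₁, g₂ * a * g₂⁻¹⁆ * ⁅g₂, a⁆ := by
      simp only [commutatorElement_def]; group
    exact this ▸ mul_mem (h₁ _ (‹A.Normal›.conj_mem a ha g₂)) (h₂ a ha)
  | inv g _ hg =>
    intro a ha
    have : ⁅g⁻¹, a⁆ = ⁅g, g⁻¹ * a * g⁻¹⁻¹⁆⁻¹ := by
      simp only [commutatorElement_def]; group
    exact this ▸ inv_mem (hg _ (‹A.Normal›.conj_mem a ha g⁻¹))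

section NormalSubgroup

variable (A : Subgroup G) [A.Normal]

def Abelianization.ofQuotientCommutator :
    A ⧸ ⁅(⊤ : Subgroup G), A⁆.subgroupOf A →* Abelianization G :=
  QuotientGroup.lift _ (Abelianization.of.comp A.subtype) fun a ha ↦
    Abelianization.commutator_subset_ker Abelianization.of
      (Subgroup.commutator_mono le_top le_top (Subgroup.mem_subgroupOf.mp ha) :
        (a : G) ∈ commutator G)

@[simp]
theorem Abelianization.ofQuotientCommutator_mk (a : A) :
    Abelianization.ofQuotientCommutator A (QuotientGroup.mk a) = Abelianization.of (a : G) :=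
  rfl

theorem mk_conjNormal_eq_mk (g : G) (a : A) :
    (QuotientGroup.mk (MulAut.conjNormal g a) : A ⧸ ⁅(⊤ : Subgroup G), A⁆.subgroupOf A) =
      QuotientGroup.mk a := by
  rw [QuotientGroup.eq, Subgroup.mem_subgroupOf]
  convert Subgroup.commutator_mem_commutator (Subgroup.mem_top g) (A.inv_mem a.2) using 1
  simp [commutatorElement_def, mul_assoc]

end NormalSubgroup

section AbelianNormal

variable (A : Subgroup G) [A.Normal] [IsMulCommutative A]

def commutatorHom (x : G) : A →* A :=
  (MulAut.conjNormal x : A ≃* A).toMonoidHom / MonoidHom.id A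

@[simp]
theorem commutatorHom_apply (x : G) (a : A) : (commutatorHom A x a : G) = ⁅x, (a : G)⁆ := by
  simp [commutatorHom, commutatorElement_def, div_eq_mul_inv]

theorem commutator_top_le_range_commutatorHom_coprod {x y : G}
    (hS : Subgroup.closure (A ∪ {x, y}) = ⊤) :
    ⁅(⊤ : Subgroup G), A⁆ ≤
      (A.subtype.comp ((commutatorHom A x).coprod (commutatorHom A y))).range := by
  refine Subgroup.commutator_top_le_of_closure_eq_top hS ?_
  rintro s (hs | rfl | rfl) a ha
  · rw [commutatorElement_eq_one_iff_commute.mpr (setLike_mul_comm hs ha)]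
    exact one_mem _
  · exact ⟨(⟨a, ha⟩, 1), by simp⟩
  · exact ⟨(1, ⟨a, ha⟩), by simp⟩

theorem commute_mul_inv_mul_of_commutatorElement_eq {a b x y : G} (ha : a ∈ A) (hb : b ∈ A)
    (h : ⁅x, y⁆ = ⁅x, b⁆ * ⁅y, a⁆) : Commute (a * x) (b⁻¹ * y) := by
  have hd : y * a * y⁻¹ ∈ A := ‹A.Normal›.conj_mem a ha y
  have h' : ⁅x, y⁆ = x * b * x⁻¹ * a⁻¹ * (b⁻¹ * (y * a * y⁻¹)) := by
    rw [h, commutatorElement_def, commutatorElement_def, mul_assoc (x * b * x⁻¹) a⁻¹,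
      setLike_mul_comm (A.inv_mem ha) (mul_mem (A.inv_mem hb) hd)]
    group
  calc a * x * (b⁻¹ * y) = b⁻¹ * (y * a * y⁻¹) * ⁅x, y⁆⁻¹ * (x * y) := by
        rw [h']; group
    _ = b⁻¹ * y * (a * x) := by simp only [commutatorElement_def]; group

end AbelianNormal

theorem mul_inv_section_mem_ker {Q : Type*} [Group Q] {p : G →* Q} {s : Q →* G}
    (hs : p.comp s = MonoidHom.id Q) (g : G) : g * (s (p g))⁻¹ ∈ p.ker := by
  rw [MonoidHom.mem_ker, map_mul, map_inv, ← MonoidHom.comp_apply, hs,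
    MonoidHom.id_apply, mul_inv_cancel]

section Splitting

variable (A : Subgroup G) [A.Normal] [IsMulCommutative A] {Q : Type*} [CommGroup Q]
  {p : G →* Q} (hp : p.ker = A) {s : Q →* G} (hs : p.comp s = MonoidHom.id Q)

def retractionModCommutator : G →* A ⧸ ⁅(⊤ : Subgroup G), A⁆.subgroupOf A :=
  MonoidHom.mk' (fun g ↦ QuotientGroup.mk ⟨_, hp ▸ mul_inv_section_mem_ker hs g⟩)
    fun g h ↦ by
      conv_rhs => rw [mul_comm, ← mk_conjNormal_eq_mk A g, ← QuotientGroup.mk_mul]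
      congr 1
      ext
      simp only [map_mul, mul_inv_rev, Subgroup.coe_mul, MulAut.conjNormal_apply]
      group

@[simp]
theorem retractionModCommutator_coe (a : A) :
    retractionModCommutator A hp hs a = QuotientGroup.mk a := by
  have hpa : p a = 1 := hp ▸ a.2
  simp [retractionModCommutator, hpa]

@[simp]
theorem retractionModCommutator_section (q : Q) : retractionModCommutator A hp hs (s q) = 1 :=
  have hps : p (s q) = q := DFunLike.congr_fun hs q
  (QuotientGroup.eq_one_iff _).mpr <| Subgroup.mem_subgroupOf.mpr <| by simp [hps]

def abelianizationEquivOfSection :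
    Abelianization G ≃* (A ⧸ ⁅(⊤ : Subgroup G), A⁆.subgroupOf A) × Q :=
  MonoidHom.toMulEquiv
    (Abelianization.lift ((retractionModCommutator A hp hs).prod p))
    ((Abelianization.ofQuotientCommutator A).coprod (Abelianization.of.comp s))
    (by ext g; simp [retractionModCommutator])
    (MonoidHom.ext fun ⟨a, q⟩ ↦ by
      induction a using QuotientGroup.induction_on with | H a => ?_
      have hpa : p a = 1 := hp ▸ a.2
      have hps : p (s q) = q := DFunLike.congr_fun hs q
      simp [hpa, hps])

end Splitting

theorem MonoidHom.injective_of_surjective_of_mulEquiv {B C : Type*} [CommGroup B] [Group.FG B]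
    [Group C] (f : B →* C) (hf : Surjective f) (e : C ≃* B) : Injective f := by
  have : Module.Finite ℤ (Additive B) := Module.Finite.iff_addGroup_fg.mpr inferInstance
  exact Injective.of_comp (f := e) <|
    OrzechProperty.injective_of_surjective_endomorphism
      (e.toMonoidHom.comp f).toAdditive.toIntLinearMap (e.surjective.comp hf)

def Commute.zpowersProdHom {u v : G} (h : Commute u v) : Multiplicative (ℤ × ℤ) →* G :=
  (MonoidHom.noncommCoprod (zpowersHom G u) (zpowersHom G v) fun _ _ ↦ h.zpow_zpow _ _).comp
    (MulEquiv.prodMultiplicative ℤ ℤ).toMonoidHom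

@[simp]
theorem Commute.zpowersProdHom_apply {u v : G} (h : Commute u v) (z : Multiplicative (ℤ × ℤ)) :
    h.zpowersProdHom z = u ^ z.toAdd.1 * v ^ z.toAdd.2 :=
  rfl

section TorusBase

open Multiplicative

variable {p : G →* Multiplicative (ℤ × ℤ)} {x y : G} (hx : p x = ofAdd (1, 0))
  (hy : p y = ofAdd (0, 1))
include hx hy

theorem map_zpow_mul_zpow (m n : ℤ) : p (x ^ m * y ^ n) = ofAdd (m, n) := by
  simp [hx, hy, ← ofAdd_zsmul, ← ofAdd_add]

theorem mul_inv_zpow_mul_zpow_mem_ker (g : G) :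
    g * (x ^ (p g).toAdd.1 * y ^ (p g).toAdd.2)⁻¹ ∈ p.ker := by
  rw [MonoidHom.mem_ker, map_mul, map_inv, map_zpow_mul_zpow hx hy, mul_inv_eq_one]
  rfl

theorem closure_ker_union_eq_top : Subgroup.closure (p.ker ∪ {x, y}) = ⊤ := by
  refine eq_top_iff.mpr fun g _ ↦ ?_
  have hk : _ ∈ Subgroup.closure (p.ker ∪ {x, y}) :=
    Subgroup.subset_closure (Or.inl (mul_inv_zpow_mul_zpow_mem_ker hx hy g))
  have hx' : x ∈ Subgroup.closure (p.ker ∪ {x, y}) := Subgroup.subset_closure (by simp)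
  have hy' : y ∈ Subgroup.closure (p.ker ∪ {x, y}) := Subgroup.subset_closure (by simp)
  simpa only [inv_mul_cancel_right] using
    mul_mem hk (mul_mem (zpow_mem hx' (p g).toAdd.1) (zpow_mem hy' (p g).toAdd.2))

theorem exists_section_of_commute (h : Commute x y) :
    ∃ s : Multiplicative (ℤ × ℤ) →* G, p.comp s = MonoidHom.id _ :=
  ⟨h.zpowersProdHom, MonoidHom.ext fun z ↦ by
    rw [MonoidHom.comp_apply, h.zpowersProdHom_apply, map_zpow_mul_zpow hx hy]
    rfl⟩

variable (A : Subgroup G) [A.Normal] [IsMulCommutative A] (hp : p.ker = A)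
include hp

theorem commutatorElement_mem_of_abelianization_mulEquiv [Group.FG A]
    (φ : Abelianization G ≃*
      (A ⧸ ⁅(⊤ : Subgroup G), A⁆.subgroupOf A) × Multiplicative (ℤ × ℤ)) :
    ⁅x, y⁆ ∈ ⁅(⊤ : Subgroup G), A⁆ := by
  let Φ := (Abelianization.ofQuotientCommutator A).coprod
    (Commute.all (Abelianization.of x) (Abelianization.of y)).zpowersProdHom
  have hΦ : Surjective Φ := by
    intro t
    induction t using QuotientGroup.induction_on with | H g => ?_
    refine ⟨(QuotientGroup.mk ⟨_, hp ▸ mul_inv_zpow_mul_zpow_mem_ker hx hy g⟩, p g), ?_⟩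
    simp only [Φ, MonoidHom.coprod_apply, Abelianization.ofQuotientCommutator_mk,
      Commute.zpowersProdHom_apply, ← map_zpow, ← map_mul, inv_mul_cancel_right]
    rfl
  have hxy : ⁅x, y⁆ ∈ A :=
    hp ▸ (map_commutatorElement p x y).trans (Commute.all _ _).commutator_eq
  have := Φ.injective_of_surjective_of_mulEquiv hΦ φ (a₁ := (QuotientGroup.mk ⟨_, hxy⟩, 1))
    (a₂ := 1)
    (by simp [Φ, map_commutatorElement, commutatorElement_eq_one_iff_mul_comm, mul_comm])
  exact Subgroup.mem_subgroupOf.mp (by simpa using this)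

theorem exists_section_of_commutatorElement_mem (h : ⁅x, y⁆ ∈ ⁅(⊤ : Subgroup G), A⁆) :
    ∃ s : Multiplicative (ℤ × ℤ) →* G, p.comp s = MonoidHom.id _ := by
  obtain ⟨⟨b, a⟩, hab⟩ :=
    commutator_top_le_range_commutatorHom_coprod A (hp ▸ closure_ker_union_eq_top hx hy) h
  have hcomm := commute_mul_inv_mul_of_commutatorElement_eq A a.2 b.2 (by simpa using hab.symm)
  have hpa : p a = 1 := hp ▸ a.2
  have hpb : p b = 1 := hp ▸ b.2
  exact exists_section_of_commute (by simp [hpa, hx]) (by simp [hpb, hy]) hcomm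

end TorusBase

theorem exists_section_of_abelianization_mulEquiv (A : Subgroup G) [A.Normal]
    [IsMulCommutative A] [Group.FG A] {p : G →* Multiplicative (ℤ × ℤ)} (hp : p.ker = A)
    (hsurj : Surjective p)
    (φ : Abelianization G ≃*
      (A ⧸ ⁅(⊤ : Subgroup G), A⁆.subgroupOf A) × Multiplicative (ℤ × ℤ)) :
    ∃ s : Multiplicative (ℤ × ℤ) →* G, p.comp s = MonoidHom.id _ := by
  obtain ⟨x, hx⟩ := hsurj (Multiplicative.ofAdd (1, 0))
  obtain ⟨y, hy⟩ := hsurj (Multiplicative.ofAdd (0, 1))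
  exact exists_section_of_commutatorElement_mem hx hy A hp
    (commutatorElement_mem_of_abelianization_mulEquiv hx hy A hp φ)

end

/-- Let `G` be a group with a finitely generated abelian normal subgroup `A` such that
`G/A ≅ ℤ × ℤ`.  Then the quotient homomorphism `G → G/A` admits a group-homomorphism
section if and only if the abelianization of `G` is isomorphic to
`(A / [G, A]) × ℤ × ℤ`. -/
theorem splitting_criterion_over_torus_base (G : Type*) [Group G]
    (A : Subgroup G) [A.Normal] [IsMulCommutative A] [Group.FG A]
    (e : (G ⧸ A) ≃* Multiplicative (ℤ × ℤ)) :
    (∃ s : (G ⧸ A) →* G, (QuotientGroup.mk' A).comp s = MonoidHom.id (G ⧸ A)) ↔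
      Nonempty (Abelianization G ≃*
        ((A ⧸ (⁅(⊤ : Subgroup G), A⁆.subgroupOf A)) × Multiplicative (ℤ × ℤ))) := by
  set p := e.toMonoidHom.comp (QuotientGroup.mk' A)
  have hp : p.ker = A := by
    ext g
    simp [p]
  constructor
  · rintro ⟨s, hs⟩
    have hs' (z : G ⧸ A) : (s z : G ⧸ A) = z := DFunLike.congr_fun hs z
    refine ⟨abelianizationEquivOfSection A hp (s := s.comp e.symm.toMonoidHom) ?_⟩
    refine MonoidHom.ext fun q ↦ ?_
    simp [p, hs']
  · rintro ⟨φ⟩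
    obtain ⟨t, ht⟩ := exists_section_of_abelianization_mulEquiv A hp
      (e.surjective.comp (QuotientGroup.mk'_surjective A)) φ
    refine ⟨t.comp e.toMonoidHom, ?_⟩
    ext z
    simpa [p] using DFunLike.congr_fun ht (e z)
end

section
/- Let π be the presented group with generators u, v, x, y and relators [u,x], [u,y], [v,x], [v,y], [x,y], [u,v]x⁻¹ (so x and y are central and [u,v] = x; this is the integer Heisenberg group times ℤ), and let N be the normal closure of {x, y} in π. Then the quotient homomorphism π → π/N admits no group-homomorphism section. -/
open scoped commutatorElement

/-- Generators: `u = 0`, `v = 1`, `x = 2`, `y = 3`.  Relators: `[u,x]`, `[u,y]`,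
`[v,x]`, `[v,y]`, `[x,y]`, `[u,v]x⁻¹`.  This presents the integer Heisenberg group
times `ℤ`, the fundamental group of a `Nil³ × E¹`-manifold which is a torus bundle
over the torus with trivial monodromy. -/
abbrev heisenbergTimesZRels : Set (FreeGroup (Fin 4)) :=
  { ⁅(FreeGroup.of 0 : FreeGroup (Fin 4)), FreeGroup.of 2⁆,
    ⁅(FreeGroup.of 0 : FreeGroup (Fin 4)), FreeGroup.of 3⁆,
    ⁅(FreeGroup.of 1 : FreeGroup (Fin 4)), FreeGroup.of 2⁆,
    ⁅(FreeGroup.of 1 : FreeGroup (Fin 4)), FreeGroup.of 3⁆,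
    ⁅(FreeGroup.of 2 : FreeGroup (Fin 4)), FreeGroup.of 3⁆,
    ⁅(FreeGroup.of 0 : FreeGroup (Fin 4)), FreeGroup.of 1⁆ * (FreeGroup.of 2)⁻¹ }

/-- The fibre subgroup: the normal closure of `{x, y}`. -/
abbrev heisenbergTimesZFibre : Subgroup (PresentedGroup heisenbergTimesZRels) :=
  Subgroup.normalClosure {PresentedGroup.of 2, PresentedGroup.of 3}

/-!
The generators `x` and `y` are central in `π`, so the fibre `N` is central. A section `s` lifts
`ū` and `v̄` to `u n` and `v m` with `n, m ∈ N`, and central factors do not change commutators: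
`[s ū, s v̄] = [u, v] = x`. But `[ū, v̄] = x̄ = 1` in `π / N`, so `x = 1` in `π`, which fails
already in the dihedral quotient of order 8.
-/

section Central

variable {G : Type*} [Group G] {z : G}

lemma commutatorElement_mul_left_of_mem_center (hz : z ∈ Subgroup.center G) (g h : G) :
    ⁅g * z, h⁆ = ⁅g, h⁆ := by
  have hconj : z * h * z⁻¹ = h := by rw [← Subgroup.mem_center_iff.mp hz, mul_inv_cancel_right]
  calc ⁅g * z, h⁆ = g * (z * h * z⁻¹) * g⁻¹ * h⁻¹ := by group
    _ = ⁅g, h⁆ := by rw [hconj, commutatorElement_def]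

lemma commutatorElement_mul_right_of_mem_center (hz : z ∈ Subgroup.center G) (g h : G) :
    ⁅g, h * z⁆ = ⁅g, h⁆ := by
  have hconj : z * g⁻¹ * z⁻¹ = g⁻¹ := by
    rw [← Subgroup.mem_center_iff.mp hz, mul_inv_cancel_right]
  calc ⁅g, h * z⁆ = g * h * (z * g⁻¹ * z⁻¹) * h⁻¹ := by group
    _ = ⁅g, h⁆ := by rw [hconj, commutatorElement_def]

lemma commutatorElement_eq_one_of_mk'_comp_eq_id {N : Subgroup G} [N.Normal]
    (hN : N ≤ Subgroup.center G) (s : G ⧸ N →* G)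
    (hs : (QuotientGroup.mk' N).comp s = MonoidHom.id (G ⧸ N)) {g h : G}
    (hgh : ⁅g, h⁆ ∈ N) : ⁅g, h⁆ = 1 := by
  have hlift : ∀ k : G, s k = k * (k⁻¹ * s k) := fun k => (mul_inv_cancel_left k _).symm
  have hcorr : ∀ k : G, k⁻¹ * s k ∈ Subgroup.center G := fun k =>
    hN <| QuotientGroup.eq.mp (DFunLike.congr_fun hs (k : G ⧸ N)).symm
  calc ⁅g, h⁆ = ⁅s g, s h⁆ := by
        rw [hlift g, hlift h, commutatorElement_mul_left_of_mem_center (hcorr g),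
          commutatorElement_mul_right_of_mem_center (hcorr h)]
    _ = s (QuotientGroup.mk' N ⁅g, h⁆) := by rw [map_commutatorElement, map_commutatorElement]; rfl
    _ = 1 := by rw [QuotientGroup.mk'_apply, (QuotientGroup.eq_one_iff _).mpr hgh, map_one]

end Central

namespace PresentedGroup

variable {α : Type*} {rels : Set (FreeGroup α)}

lemma mem_center_of_forall_commute_of {g : PresentedGroup rels}
    (hg : ∀ i, Commute (of i) g) : g ∈ Subgroup.center (PresentedGroup rels) :=
  Subgroup.mem_center_iff.mpr fun k =>
    Subgroup.mem_centralizer_singleton_iff.mp <| generated_by rels _ (fun i =>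
      Subgroup.mem_centralizer_singleton_iff.mpr (hg i)) k

lemma commute_of_of_commutatorElement_mem {i j : α}
    (h : ⁅FreeGroup.of i, FreeGroup.of j⁆ ∈ rels) : Commute (of i : PresentedGroup rels) (of j) :=
  commutatorElement_eq_one_iff_commute.mp (one_of_mem h)

end PresentedGroup

open PresentedGroup

lemma heisenbergTimesZ_of_two_mem_center :
    (of 2 : PresentedGroup heisenbergTimesZRels) ∈ Subgroup.center _ :=
  mem_center_of_forall_commute_of fun i => by
    fin_cases i
    exacts [commute_of_of_commutatorElement_mem (by simp),
      commute_of_of_commutatorElement_mem (by simp), .refl _,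
      (commute_of_of_commutatorElement_mem (by simp)).symm]

lemma heisenbergTimesZ_of_three_mem_center :
    (of 3 : PresentedGroup heisenbergTimesZRels) ∈ Subgroup.center _ :=
  mem_center_of_forall_commute_of fun i => by
    fin_cases i
    exacts [commute_of_of_commutatorElement_mem (by simp),
      commute_of_of_commutatorElement_mem (by simp),
      commute_of_of_commutatorElement_mem (by simp), .refl _]

lemma heisenbergTimesZFibre_le_center :
    heisenbergTimesZFibre ≤ Subgroup.center (PresentedGroup heisenbergTimesZRels) :=
  Subgroup.normalClosure_le_normal <|
    Set.pair_subset heisenbergTimesZ_of_two_mem_center heisenbergTimesZ_of_three_mem_center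

lemma heisenbergTimesZ_commutatorElement_of_zero_of_one :
    ⁅(of 0 : PresentedGroup heisenbergTimesZRels), (of 1 : PresentedGroup heisenbergTimesZRels)⁆ =
      of 2 :=
  (map_commutatorElement (mk _) _ _).symm.trans (mk_eq_mk_of_mul_inv_mem (by simp))

/-- The dihedral group of order 8 is the Heisenberg group over `𝔽₂`; `x = [u, v]` goes to the
rotation by a half turn. -/
def heisenbergTimesZToDihedral : PresentedGroup heisenbergTimesZRels →* DihedralGroup 4 :=
  toGroup (f := ![.r 1, .sr 0, .r 2, 1]) <| by
    simp only [Set.mem_insert_iff, Set.mem_singleton_iff]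
    rintro r (rfl | rfl | rfl | rfl | rfl | rfl) <;> decide

lemma heisenbergTimesZ_of_two_ne_one : (of 2 : PresentedGroup heisenbergTimesZRels) ≠ 1 := by
  intro h
  have := congrArg heisenbergTimesZToDihedral h
  rw [heisenbergTimesZToDihedral, toGroup.of, map_one] at this
  exact absurd this (by decide)

/-- The quotient map `π → π/N` (the torus bundle over the torus with group the
integer Heisenberg group times `ℤ`) admits no group-homomorphism section. -/
theorem heisenbergTimesZ_bundle_has_no_section :
    ¬ ∃ s : (PresentedGroup heisenbergTimesZRels ⧸ heisenbergTimesZFibre) →*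
        PresentedGroup heisenbergTimesZRels,
      (QuotientGroup.mk' heisenbergTimesZFibre).comp s =
        MonoidHom.id (PresentedGroup heisenbergTimesZRels ⧸ heisenbergTimesZFibre) := by
  rintro ⟨s, hs⟩
  have hx : (of 2 : PresentedGroup heisenbergTimesZRels) ∈ heisenbergTimesZFibre :=
    Subgroup.subset_normalClosure (Set.mem_insert _ _)
  rw [← heisenbergTimesZ_commutatorElement_of_zero_of_one] at hx
  apply heisenbergTimesZ_of_two_ne_one
  rw [← heisenbergTimesZ_commutatorElement_of_zero_of_one]
  exact commutatorElement_eq_one_of_mk'_comp_eq_id heisenbergTimesZFibre_le_center s hs hx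
end

section
/- Let κ be the Klein bottle group, the presented group on two generators x, y with the single relator x y x⁻¹ y (i.e. x y x⁻¹ = y⁻¹). Then the center of κ is the cyclic subgroup generated by the image of x²; that is, the center of κ equals the set of integer powers of x². -/
/-- The Klein bottle group `κ = ⟨x, y | xyx⁻¹y⟩`, with `x = 0` and `y = 1`. -/
abbrev kleinBottleRels : Set (FreeGroup (Fin 2)) :=
  { (FreeGroup.of 0 : FreeGroup (Fin 2)) * FreeGroup.of 1 * (FreeGroup.of 0)⁻¹ *
      FreeGroup.of 1 }

/-!
Sending `x ↦ (0, 1)` and `y ↦ (1, 0)` identifies `κ` with the semidirect product `ℤ ⋊ ℤ`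
in which `k` acts on `ℤ` by `(-1) ^ k`. In a semidirect product of abelian groups, `(n, k)`
is central exactly when `n` is fixed by the whole action and `k` acts trivially. Negation
fixes only `0` and the kernel of `k ↦ (-1) ^ k` is `2ℤ`, so the center is `0 ⋊ 2ℤ`, the
image of `⟨x²⟩`.
-/

open Subgroup Multiplicative

namespace SemidirectProduct

theorem lift_compat_of_closure_eq_top {N G H : Type*} [Group N] [Group G] [Group H]
    {φ : G →* MulAut N} (fn : N →* H) (fg : G →* H) {s : Set G} (hs : closure s = ⊤)
    (h : ∀ g ∈ s, ∀ n, fn (φ g n) = MulAut.conj (fg g) (fn n)) (g : G) :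
    fn.comp (φ g).toMonoidHom = (MulAut.conj (fg g)).toMonoidHom.comp fn := by
  suffices ∀ n, fn (φ g n) = MulAut.conj (fg g) (fn n) from MonoidHom.ext this
  induction (hs ▸ mem_top g : g ∈ closure s) using closure_induction with
  | mem g hg => exact h g hg
  | one => simp
  | mul a b _ _ ha hb =>
    intro n
    rw [map_mul, MulAut.mul_apply, ha, hb, map_mul, map_mul, MulAut.mul_apply]
  | inv a _ ha =>
    intro n
    have := ha ((φ a)⁻¹ n)
    rw [MulAut.apply_inv_self] at this
    rw [map_inv, map_inv, map_inv, this, MulAut.inv_apply_self]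

theorem mem_center_iff_of_comm {N G : Type*} [CommGroup N] [CommGroup G]
    {φ : G →* MulAut N} {z : N ⋊[φ] G} :
    z ∈ center (N ⋊[φ] G) ↔ (∀ g, φ g z.left = z.left) ∧ z.right ∈ φ.ker := by
  rw [mem_center_iff, MonoidHom.mem_ker]
  refine ⟨fun hz => ⟨fun g => ?_, ?_⟩, fun ⟨hfix, hker⟩ w => ?_⟩
  · simpa using congr_arg left (hz (inr g))
  · ext n
    simpa [mul_comm n] using (congr_arg left (hz (inl n))).symm
  · ext
    · simp [hfix, hker, mul_comm]
    · exact mul_comm _ _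

end SemidirectProduct

open SemidirectProduct

noncomputable def negAction : Multiplicative ℤ →* MulAut (Multiplicative ℤ) :=
  zpowersHom _ (MulEquiv.inv _)

theorem negAction_ofAdd_one : negAction (ofAdd 1) = MulEquiv.inv _ := by
  simp [negAction]

theorem ker_negAction : negAction.ker = zpowers (ofAdd 2) := by
  have : orderOf (MulEquiv.inv (Multiplicative ℤ)) = 2 :=
    orderOf_eq_prime (by ext a; simp [sq]) fun h => by
      simpa [inv_eq_self] using congr($h (ofAdd 1))
  rw [negAction, zpowersHom_ker_eq, this]
  rfl

abbrev KleinBottleModel := Multiplicative ℤ ⋊[negAction] Multiplicative ℤ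

theorem center_kleinBottleModel :
    center KleinBottleModel = (zpowers (ofAdd 2)).map inr := by
  ext z
  rw [mem_center_iff_of_comm, ker_negAction, mem_map]
  constructor
  · rintro ⟨hfix, hr⟩
    have hleft : z.left = 1 := by
      simpa [negAction_ofAdd_one, inv_eq_self] using hfix (ofAdd 1)
    exact ⟨z.right, hr, SemidirectProduct.ext hleft.symm rfl⟩
  · rintro ⟨r, hr, rfl⟩
    exact ⟨fun g => map_one (negAction g), hr⟩

theorem zpowers_ofAdd_one_eq_top : zpowers (ofAdd (1 : ℤ)) = ⊤ :=
  eq_top_iff.2 fun a _ => ⟨toAdd a, by simp [← ofAdd_zsmul]⟩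

theorem MulEquiv.comap_center {G H : Type*} [Group G] [Group H] (e : G ≃* H) :
    (center H).comap (e : G →* H) = center G := by
  ext g
  exact MulEquivClass.apply_mem_center_iff e

local notation "κ" => PresentedGroup kleinBottleRels

theorem kleinBottle_conj : (.of 0 * .of 1 * (.of 0)⁻¹ : κ) = (.of 1)⁻¹ :=
  eq_inv_of_mul_eq_one_left (PresentedGroup.one_of_mem (Set.mem_singleton _))

noncomputable def toKleinBottleModel : κ →* KleinBottleModel :=
  PresentedGroup.toGroup (f := ![inr (ofAdd 1), inl (ofAdd 1)]) <| by
    rintro r rfl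
    simp only [map_mul, map_inv, FreeGroup.lift_apply_of, Matrix.cons_val_zero,
      Matrix.cons_val_one]
    rw [← map_inv inr, ← inl_aut, negAction_ofAdd_one, ← map_mul]
    simp

@[simp]
theorem toKleinBottleModel_of_zero : toKleinBottleModel (.of 0) = inr (ofAdd 1) :=
  PresentedGroup.toGroup.of _

@[simp]
theorem toKleinBottleModel_of_one : toKleinBottleModel (.of 1) = inl (ofAdd 1) :=
  PresentedGroup.toGroup.of _

noncomputable def ofKleinBottleModel : KleinBottleModel →* κ :=
  lift (zpowersHom κ (.of 1)) (zpowersHom κ (.of 0)) <|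
    lift_compat_of_closure_eq_top _ _ (s := {ofAdd 1})
      (by rw [← zpowers_eq_closure, zpowers_ofAdd_one_eq_top]) <| by
      rintro g rfl n
      simp only [zpowersHom_apply, negAction_ofAdd_one, MulEquiv.inv_apply, toAdd_inv, zpow_neg,
        map_zpow, toAdd_ofAdd, zpow_one, MulAut.conj_apply, kleinBottle_conj, inv_zpow]

@[simp]
theorem ofKleinBottleModel_inl (n : Multiplicative ℤ) :
    ofKleinBottleModel (inl n) = .of 1 ^ toAdd n :=
  lift_inl ..

@[simp]
theorem ofKleinBottleModel_inr (k : Multiplicative ℤ) :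
    ofKleinBottleModel (inr k) = .of 0 ^ toAdd k :=
  lift_inr ..

noncomputable def kleinBottleEquiv : κ ≃* KleinBottleModel :=
  toKleinBottleModel.toMulEquiv ofKleinBottleModel
    (PresentedGroup.ext fun i => by fin_cases i <;> simp)
    (hom_ext (MonoidHom.ext_mint (by simp)) (MonoidHom.ext_mint (by simp)))

theorem toKleinBottleModel_of_zero_sq : toKleinBottleModel (.of 0 ^ 2) = inr (ofAdd 2) := by
  rw [map_pow, toKleinBottleModel_of_zero, ← map_pow]
  rfl

/-- The center of the Klein bottle group is the cyclic subgroup generated by the image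
of `x²`. -/
theorem center_kleinBottleGroup :
    Subgroup.center (PresentedGroup kleinBottleRels) =
      Subgroup.zpowers ((PresentedGroup.of 0 : PresentedGroup kleinBottleRels) ^ 2) := by
  calc center κ = (center KleinBottleModel).comap toKleinBottleModel :=
        kleinBottleEquiv.comap_center.symm
    _ = ((zpowers (.of 0 ^ 2)).map toKleinBottleModel).comap toKleinBottleModel := by
        rw [center_kleinBottleModel, MonoidHom.map_zpowers, MonoidHom.map_zpowers,
          toKleinBottleModel_of_zero_sq]
    _ = zpowers (.of 0 ^ 2) := comap_map_eq_self_of_injective kleinBottleEquiv.injective _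
end
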